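/- arXiv:2401.11245 — 4 statements merged into one kernel-verified Lean document; each statement's English description precedes it below -/
import Mathlib

section
/- Let $\{a_\alpha\}_{\alpha\in\mathbb{N}_0^d}$ be a real sequence with $a_\alpha/|\alpha|\to+\infty$ as $|\alpha|\to+\infty$, let $\mathcal{L}_S$ be the set of affine functions lying below the sequence (i.e. $f(\alpha)\leq a_\alpha$ for all $\alpha$), and define $F(x)=\sup_{f\in\mathcal{L}_S}f(x)$. Then $F(x)<+\infty$ for every $x\in[0,+\infty)^d$. -/
open Filter Set

theorem stmt4 (d : ℕ) (a : (Fin d → ℕ) → ℝ)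
    (ha : ∀ C : ℝ, ∃ N : ℕ, ∀ α : Fin d → ℕ, N ≤ ∑ i, α i →
      C * (∑ i, (α i : ℝ)) ≤ a α)
    (x : Fin d → ℝ) (hx : ∀ i, 0 ≤ x i) :
    sSup {y : EReal | ∃ (k : Fin d → ℝ) (c : ℝ),
        (∀ α : Fin d → ℕ, (∑ i, k i * (α i : ℝ)) + c ≤ a α) ∧
        y = (((∑ i, k i * x i) + c : ℝ) : EReal)} < ⊤ := by
  set m : ℕ := ⌈∑ i, x i⌉₊ + 1 with hm
  have hm0 : (0:ℝ) < (m:ℝ) := by positivity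
  have hsum_le : (∑ i, x i) ≤ (m:ℝ) := by
    calc (∑ i, x i) ≤ (⌈∑ i, x i⌉₊ : ℝ) := Nat.le_ceil _
    _ ≤ (m:ℝ) := by exact_mod_cast Nat.le_succ _
  set M : ℝ := (∑ i, x i / m * a (fun j => if j = i then m else 0)) +
      (1 - (∑ i, x i) / m) * a 0 with hM
  have hle : sSup {y : EReal | ∃ (k : Fin d → ℝ) (c : ℝ),
        (∀ α : Fin d → ℕ, (∑ i, k i * (α i : ℝ)) + c ≤ a α) ∧
        y = (((∑ i, k i * x i) + c : ℝ) : EReal)} ≤ (M : EReal) := by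
    apply sSup_le
    rintro y ⟨k, c, hf, rfl⟩
    have hc : c ≤ a 0 := by simpa using hf 0
    have hkey : ∀ i, k i * (m:ℝ) + c ≤ a (fun j => if j = i then m else 0) := by
      intro i
      have := hf (fun j => if j = i then m else 0)
      simpa [apply_ite (fun n : ℕ => (n:ℝ)), mul_ite, Finset.sum_ite_eq'] using this
    have hmain : (∑ i, k i * x i) + c ≤ M := by
      have h1 : (∑ i, k i * x i) ≤ ∑ i, x i / m *
          (a (fun j => if j = i then m else 0) - c) := by
        apply Finset.sum_le_sum
        intro i _
        have hki := hkey i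
        have hxi := hx i
        have : k i * x i = x i / m * (k i * m) := by field_simp
        rw [this]
        have : k i * (m:ℝ) ≤ a (fun j => if j = i then m else 0) - c := by linarith
        exact mul_le_mul_of_nonneg_left this (by positivity)
      set s : ℝ := (∑ i, x i) / m with hs_def
      have hs1 : s ≤ 1 := by rw [hs_def, div_le_one hm0]; exact hsum_le
      have h2 : ∑ i, x i / m * (a (fun j => if j = i then m else 0) - c)
          = (∑ i, x i / m * a (fun j => if j = i then m else 0)) - s * c := by
        rw [hs_def]
        simp only [mul_sub]
        rw [Finset.sum_sub_distrib]
        congr 1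
        rw [Finset.sum_div, Finset.sum_mul]
      have h3 : (1 - s) * c ≤ (1 - s) * a 0 :=
        mul_le_mul_of_nonneg_left hc (by linarith)
      have : (∑ i, k i * x i) + c ≤
          (∑ i, x i / m * a (fun j => if j = i then m else 0)) + (1 - s) * c := by
        rw [h2] at h1; linarith [h1]
      calc (∑ i, k i * x i) + c
          ≤ (∑ i, x i / m * a (fun j => if j = i then m else 0)) + (1 - s) * c := this
        _ ≤ (∑ i, x i / m * a (fun j => if j = i then m else 0)) + (1 - s) * a 0 := by linarith
        _ = M := by rw [hM, hs_def]
    exact_mod_cast EReal.coe_le_coe_iff.mpr hmain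
  exact lt_of_le_of_lt hle (EReal.coe_lt_top M)
end

section
/- Let $\{a_p\}_{p\in\mathbb{N}_0}$ be a real sequence with $a_p/p\to+\infty$ as $p\to+\infty$, and let $F(x)=\sup\{f(x): f \text{ affine on } \mathbb{R}, f(p)\leq a_p\ \forall p\in\mathbb{N}_0\}$. Then $F(0)=a_0$. -/
open Filter Set

theorem stmt8 (a : ℕ → ℝ)
    (ha : ∀ C : ℝ, ∃ N : ℕ, ∀ p : ℕ, N ≤ p → C * (p : ℝ) ≤ a p)
    (F : ℝ → ℝ)
    (hF : ∀ x : ℝ, F x = sSup {y : ℝ | ∃ k c : ℝ,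
        (∀ p : ℕ, k * (p : ℝ) + c ≤ a p) ∧ y = k * x + c}) :
    F 0 = a 0 := by
  obtain ⟨N, hN⟩ := ha 1
  set M := N + 1 with hM
  set s : Finset ℕ := Finset.Icc 1 M with hs'
  have hs : s.Nonempty := ⟨1, by simp [hs', hM]⟩
  set k : ℝ := min (s.inf' hs fun p => (a p - a 0) / p) (1 - |a 0|) with hk'
  have hk : ∀ p : ℕ, k * (p : ℝ) + a 0 ≤ a p := by
    intro p
    rcases Nat.eq_zero_or_pos p with h0 | hp
    · simp [h0]
    rcases le_or_gt p M with hpM | hpM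
    · have hmem : p ∈ s := Finset.mem_Icc.mpr ⟨hp, hpM⟩
      have h1 : k ≤ (a p - a 0) / p :=
        le_trans (min_le_left _ _) (Finset.inf'_le _ hmem)
      have hp' : (0:ℝ) < p := by exact_mod_cast hp
      have h2 : k * p ≤ a p - a 0 := (le_div_iff₀ hp').mp h1
      linarith
    · have h2 := hN p (by omega)
      have h3 : k ≤ 1 - |a 0| := min_le_right _ _
      have hp1 : (1:ℝ) ≤ p := by exact_mod_cast hp
      nlinarith [le_abs_self (a 0), abs_nonneg (a 0)]
  have hmem : a 0 ∈ {y : ℝ | ∃ k c : ℝ,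
      (∀ p : ℕ, k * (p : ℝ) + c ≤ a p) ∧ y = k * 0 + c} := ⟨k, a 0, hk, by ring⟩
  rw [hF 0]
  apply le_antisymm
  · apply csSup_le ⟨a 0, hmem⟩
    rintro y ⟨k', c, hkc, rfl⟩
    have := hkc 0
    simpa using this
  · refine le_csSup ⟨a 0, ?_⟩ hmem
    rintro y ⟨k', c, hkc, rfl⟩
    have := hkc 0
    simpa using this
end

section
/- Let $\{M_\alpha\}_{\alpha\in\mathbb{N}_0^d}$ be positive reals with $M_0=1$ and $M_\alpha^{1/|\alpha|}\to+\infty$, and suppose there exists a convex function $G:[0,+\infty)^d\to\mathbb{R}$ with $G(\alpha)=\log M_\alpha$ for all $\alpha\in\mathbb{N}_0^d$. Then for every $\alpha\in\mathbb{N}_0^d$, $M_\alpha=\sup_{s\in(0,+\infty)^d} s^\alpha e^{-\omega_{\mathbf{M}}(s)}$, where $\omega_{\mathbf{M}}(s)=\sup_{\beta\in\mathbb{N}_0^d}\log(s^\beta/M_\beta)$. -/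
open Filter Set

lemma exists_subgrad {ι : Type*} [Fintype ι] (G : (ι → ℝ) → ℝ)
    (hG : ConvexOn ℝ {x : ι → ℝ | ∀ i, 0 ≤ x i} G)
    (a : ι → ℝ) (ha : ∀ i, 0 < a i) :
    ∃ ξ : ι → ℝ, ∀ y : ι → ℝ, (∀ i, 0 ≤ y i) →
      ∑ i, ξ i * (y i - a i) ≤ G y - G a := by
  classical
  set U : Set (ι → ℝ) := {x | ∀ i, 0 < x i} with hU
  have hUorth : U ⊆ {x : ι → ℝ | ∀ i, 0 ≤ x i} := fun x hx i => (hx i).le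
  have hUopen : IsOpen U := by
    have : U = Set.pi Set.univ (fun _ : ι => Ioi (0:ℝ)) := by
      ext x; simp [hU, Set.mem_pi]
    rw [this]
    exact isOpen_set_pi Set.finite_univ (fun i _ => isOpen_Ioi)
  have hUconv : Convex ℝ U := by
    have : U = Set.pi Set.univ (fun _ : ι => Ioi (0:ℝ)) := by
      ext x; simp [hU, Set.mem_pi]
    rw [this]
    exact convex_pi (fun i _ => convex_Ioi 0)
  have hGU : ConvexOn ℝ U G := hG.subset hUorth hUconv
  have hcont : ContinuousOn G U := hGU.continuousOn hUopen
  -- strict epigraph over U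
  set S : Set ((ι → ℝ) × ℝ) := {p | p.1 ∈ U ∧ G p.1 < p.2} with hS
  have hSopen : IsOpen S := by
    have h1 : ContinuousOn (fun p : (ι → ℝ) × ℝ => p.2 - G p.1) (U ×ˢ (univ : Set ℝ)) :=
      ContinuousOn.sub (continuous_snd.continuousOn)
        (hcont.comp continuous_fst.continuousOn (fun p hp => hp.1))
    have h2 : IsOpen (U ×ˢ (univ : Set ℝ)) := hUopen.prod isOpen_univ
    have h3 := h1.isOpen_inter_preimage h2 isOpen_Ioi (t := Ioi (0:ℝ))
    convert h3 using 1
    ext p; simp [hS, sub_pos]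
  have hSconv : Convex ℝ S := by
    rintro p hp q hq u v hu hv huv
    refine ⟨hUconv hp.1 hq.1 hu hv huv, ?_⟩
    calc G (u • p.1 + v • q.1) ≤ u * G p.1 + v * G q.1 :=
          hG.2 (hUorth hp.1) (hUorth hq.1) hu hv huv
      _ < u * p.2 + v * q.2 := by
          rcases eq_or_lt_of_le hu with h | h
          · rcases eq_or_lt_of_le hv with h' | h'
            · exfalso; rw [← h, ← h'] at huv; norm_num at huv
            · rw [← h]; simpa using (mul_lt_mul_of_pos_left hq.2 h')
          · rcases eq_or_lt_of_le hv with h' | h'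
            · rw [← h']; simpa using (mul_lt_mul_of_pos_left hp.2 h)
            · exact add_lt_add (mul_lt_mul_of_pos_left hp.2 h)
                (mul_lt_mul_of_pos_left hq.2 h')
  have haU : a ∈ U := ha
  have hnotin : ((a, G a) : (ι → ℝ) × ℝ) ∉ S := fun h => lt_irrefl _ h.2
  obtain ⟨f, hf⟩ := geometric_hahn_banach_open_point hSconv hSopen hnotin
  -- coefficient of the vertical direction
  set c₀ : ℝ := f (0, 1) with hc₀
  have hvert : ∀ (y : ι → ℝ) (t : ℝ), f (y, t) = f (y, 0) + t * c₀ := by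
    intro y t
    have : ((y, t) : (ι → ℝ) × ℝ) = (y, 0) + t • (0, 1) := by
      simp [Prod.ext_iff]
    rw [this, map_add, map_smul, smul_eq_mul, hc₀]
  have hc₀neg : c₀ < 0 := by
    have h1 : ((a, G a + 1) : (ι → ℝ) × ℝ) ∈ S := ⟨haU, by show G a < G a + 1; linarith⟩
    have h2 := hf _ h1
    rw [hvert a (G a + 1), hvert a (G a)] at h2
    nlinarith
  -- f (y, G y) ≤ f (a, G a) for y ∈ U
  have hle1 : ∀ y, y ∈ U → f (y, G y) ≤ f (a, G a) := by
    intro y hy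
    refine le_of_forall_pos_le_add (fun ε hε => ?_)
    have hδ : (0:ℝ) < ε / (-c₀) := div_pos hε (by linarith)
    have hmem : ((y, G y + ε / (-c₀)) : (ι → ℝ) × ℝ) ∈ S :=
      ⟨hy, by show G y < G y + ε / (-c₀); linarith⟩
    have h := hf _ hmem
    rw [hvert y (G y + ε / (-c₀))] at h
    rw [hvert y (G y)]
    have hc0 : c₀ ≠ 0 := by linarith
    have hcalc : (ε / (-c₀)) * c₀ = -ε := by
      rw [div_mul_eq_mul_div, div_neg, mul_div_assoc, div_self hc0, mul_one]
    have hexp : (G y + ε / (-c₀)) * c₀ = G y * c₀ + (ε / (-c₀)) * c₀ := by ring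
    linarith
  -- extend to the closed orthant by averaging with a
  have hle2 : ∀ y : ι → ℝ, (∀ i, 0 ≤ y i) → f (y, G y) ≤ f (a, G a) := by
    intro y hy
    set z : ι → ℝ := (2⁻¹ : ℝ) • y + (2⁻¹ : ℝ) • a with hz
    have hzU : z ∈ U := by
      intro i
      have := hy i; have := ha i
      simp only [hz, Pi.add_apply, Pi.smul_apply, smul_eq_mul]
      nlinarith
    have hGz : G z ≤ 2⁻¹ * G y + 2⁻¹ * G a :=
      hG.2 hy (fun i => (ha i).le) (by norm_num) (by norm_num) (by norm_num)
    have hcomb : ((z, 2⁻¹ * G y + 2⁻¹ * G a) : (ι → ℝ) × ℝ)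
        = (2⁻¹ : ℝ) • ((y, G y) : (ι → ℝ) × ℝ) + (2⁻¹ : ℝ) • ((a, G a)) := by
      simp [hz, Prod.ext_iff]
    have h1 : f (z, 2⁻¹ * G y + 2⁻¹ * G a) = 2⁻¹ * f (y, G y) + 2⁻¹ * f (a, G a) := by
      rw [hcomb, map_add, map_smul, map_smul]; simp
    have h2 : f (z, 2⁻¹ * G y + 2⁻¹ * G a) ≤ f (z, G z) := by
      rw [hvert z _, hvert z (G z)]
      nlinarith
    have h3 := hle1 z hzU
    nlinarith [h1, h2, h3]
  -- linear decomposition of the horizontal part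
  have hlin : ∀ v : ι → ℝ, f (v, 0) = ∑ i, v i * f (Pi.single i 1, 0) := by
    intro v
    have hv : ((v, 0) : (ι → ℝ) × ℝ) = ∑ i, v i • ((Pi.single i 1 : ι → ℝ), (0:ℝ)) := by
      rw [Prod.ext_iff]
      constructor
      · simp only [Prod.fst_sum, Prod.smul_fst]
        ext j
        simp [Pi.single_apply, Finset.sum_apply, mul_ite]
      · simp [Prod.snd_sum]
    rw [hv, map_sum]
    refine Finset.sum_congr rfl fun i _ => ?_
    rw [map_smul, smul_eq_mul]
  refine ⟨fun i => f (Pi.single i 1, 0) / (-c₀), fun y hy => ?_⟩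
  have key := hle2 y hy
  rw [hvert y (G y), hvert a (G a)] at key
  -- f(y,0) + G y * c₀ ≤ f(a,0) + G a * c₀
  have hsum : ∑ i, (f (Pi.single i 1, 0) / (-c₀)) * (y i - a i)
      = (f (y, 0) - f (a, 0)) / (-c₀) := by
    rw [hlin y, hlin a, ← Finset.sum_sub_distrib, Finset.sum_div]
    congr 1; ext i; ring
  rw [hsum]
  rw [div_le_iff₀ (by linarith : (0:ℝ) < -c₀)]
  nlinarith
lemma fin_small (d N : ℕ) : {β : Fin d → ℕ | ∑ i, β i < N}.Finite := by
  apply Set.Finite.subset (Set.Finite.pi (fun _ : Fin d => Set.finite_Iio N))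
  intro β hβ
  simp only [Set.mem_pi, Set.mem_univ, Set.mem_Iio, forall_true_left]
  intro i
  exact lt_of_le_of_lt (Finset.single_le_sum (fun j _ => Nat.zero_le _) (Finset.mem_univ i)) hβ

lemma exists_xi {d : ℕ} (M : (Fin d → ℕ) → ℝ)
    (hMpos : ∀ α, 0 < M α)
    (hM : ∀ C : ℝ, 0 < C → ∃ N : ℕ, ∀ α : Fin d → ℕ, N ≤ ∑ i, α i →
      C ^ (∑ i, α i) ≤ M α)
    (G : (Fin d → ℝ) → ℝ)
    (hG : ConvexOn ℝ {x : Fin d → ℝ | ∀ i, 0 ≤ x i} G)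
    (hGa : ∀ α : Fin d → ℕ, G (fun i => (α i : ℝ)) = Real.log (M α))
    (α : Fin d → ℕ) :
    ∃ ξ : Fin d → ℝ, ∀ β : Fin d → ℕ,
      ∑ i, ξ i * ((β i : ℝ) - (α i : ℝ)) ≤ Real.log (M β) - Real.log (M α) := by
  classical
  let emb : ({i : Fin d // α i ≠ 0} → ℝ) → (Fin d → ℝ) :=
    fun x i => if h : α i ≠ 0 then x ⟨i, h⟩ else 0
  have hemb_nonneg : ∀ x : {i : Fin d // α i ≠ 0} → ℝ, (∀ i, 0 ≤ x i) →
      (emb x) ∈ {x : Fin d → ℝ | ∀ i, 0 ≤ x i} := by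
    intro x hx i
    by_cases h : α i = 0
    · simp [emb, h]
    · simpa [emb, h] using hx ⟨i, h⟩
  have hG' : ConvexOn ℝ {x : {i : Fin d // α i ≠ 0} → ℝ | ∀ i, 0 ≤ x i}
      (fun x => G (emb x)) := by
    constructor
    · intro x hx y hy u v hu hv huv i
      have := add_nonneg (mul_nonneg hu (hx i)) (mul_nonneg hv (hy i))
      simpa using this
    · intro x hx y hy u v hu hv huv
      have hcomb : emb (u • x + v • y) = u • emb x + v • emb y := by
        funext i
        by_cases h : α i = 0 <;> simp [emb, h]
      simp only [hcomb]
      exact hG.2 (hemb_nonneg x hx) (hemb_nonneg y hy) hu hv huv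
  have ha : ∀ i : {i : Fin d // α i ≠ 0}, (0:ℝ) < (α i.1 : ℝ) := by
    intro i; exact_mod_cast Nat.pos_of_ne_zero i.2
  obtain ⟨η, hη⟩ := exists_subgrad (fun x => G (emb x)) hG'
    (fun i => (α i.1 : ℝ)) ha
  have hemba : emb (fun i => (α i.1 : ℝ)) = fun i => (α i : ℝ) := by
    funext i
    by_cases h : α i = 0
    · simp [emb, h]
    · simp [emb, h]
  -- restriction of β to the support of α
  set βres : (Fin d → ℕ) → (Fin d → ℕ) :=
    fun β i => if α i ≠ 0 then β i else 0 with hβres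
  have hres : ∀ β : Fin d → ℕ,
      emb (fun i : {i : Fin d // α i ≠ 0} => (β i.1 : ℝ)) = fun i => ((βres β i : ℕ) : ℝ) := by
    intro β; funext i
    by_cases h : α i = 0 <;> simp [emb, hβres, h]
  have hηβ : ∀ β : Fin d → ℕ,
      ∑ i : {i : Fin d // α i ≠ 0}, η i * ((β i.1 : ℝ) - (α i.1 : ℝ))
        ≤ Real.log (M (βres β)) - Real.log (M α) := by
    intro β
    have h := hη (fun i => (β i.1 : ℝ)) (fun i => Nat.cast_nonneg _)
    simp only [hres β, hemba] at h
    rwa [hGa, hGa] at h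
  set H : ℝ := ∑ i : {i : Fin d // α i ≠ 0}, |η i| with hH
  have hHnn : 0 ≤ H := Finset.sum_nonneg fun i _ => abs_nonneg _
  obtain ⟨N, hN⟩ := hM (Real.exp (H + 1)) (Real.exp_pos _)
  set K : ℝ := Real.log (M α) - ∑ i : {i : Fin d // α i ≠ 0}, η i * (α i.1 : ℝ) with hK
  set expr : (Fin d → ℕ) → ℝ := fun β => Real.log (M β) - Real.log (M α)
    - ∑ i : {i : Fin d // α i ≠ 0}, η i * ((β i.1 : ℝ) - (α i.1 : ℝ)) with hexpr
  have hfin := fin_small d N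
  set Fs : Finset (Fin d → ℕ) := hfin.toFinset with hFs
  set T₀ : ℝ := |K| + ∑ β ∈ Fs, |expr β| with hT₀
  have hT₀nn : 0 ≤ T₀ := add_nonneg (abs_nonneg _) (Finset.sum_nonneg fun _ _ => abs_nonneg _)
  have hT₀K : |K| ≤ T₀ := le_add_of_nonneg_right (Finset.sum_nonneg fun _ _ => abs_nonneg _)
  have hT₀β : ∀ β ∈ Fs, |expr β| ≤ T₀ := by
    intro β hβ
    have := Finset.single_le_sum (f := fun β => |expr β|) (fun _ _ => abs_nonneg _) hβ
    calc |expr β| ≤ ∑ γ ∈ Fs, |expr γ| := this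
      _ ≤ T₀ := le_add_of_nonneg_left (abs_nonneg _)
  -- the key inequality
  have hkey : ∀ β : Fin d → ℕ,
      (-T₀) * (∑ i ∈ Finset.univ.filter (fun i => α i = 0), (β i : ℝ)) ≤ expr β := by
    intro β
    set k : ℕ := ∑ i ∈ Finset.univ.filter (fun i => α i = 0), β i with hk
    have hcast : ∑ i ∈ Finset.univ.filter (fun i => α i = 0), (β i : ℝ) = (k : ℝ) := by
      rw [hk]; push_cast; rfl
    rw [hcast]
    rcases Nat.eq_zero_or_pos k with hk0 | hk1
    · -- k = 0 : β vanishes on the zero set of α, so βres β = β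
      have hβz : ∀ i, α i = 0 → β i = 0 := by
        intro i hi
        have := (Finset.sum_eq_zero_iff.mp (hk ▸ hk0)) i
          (Finset.mem_filter.mpr ⟨Finset.mem_univ i, hi⟩)
        exact this
      have hresβ : βres β = β := by
        funext i
        by_cases h : α i ≠ 0
        · simp [hβres, h]
        · simp [hβres, h, hβz i (not_not.mp h)]
      have h1 := hηβ β
      rw [hresβ] at h1
      rw [hk0]
      simp only [Nat.cast_zero, mul_zero]
      simp only [hexpr]
      linarith
    · -- k ≥ 1
      have hkR : (1:ℝ) ≤ (k : ℝ) := by exact_mod_cast hk1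
      have hmain : -T₀ ≤ expr β := by
        by_cases hsmall : ∑ i, β i < N
        · have hβFs : β ∈ Fs := by
            rw [hFs, Set.Finite.mem_toFinset]; exact hsmall
          have := hT₀β β hβFs
          have := neg_abs_le (expr β)
          linarith
        · push_neg at hsmall
          have h1 := hN β hsmall
          have hL : (∑ i, (β i : ℝ)) * (H + 1) ≤ Real.log (M β) := by
            have h2 := Real.log_le_log (pow_pos (Real.exp_pos _) _) h1
            rw [Real.log_pow, Real.log_exp] at h2
            have : ∑ i, (β i : ℝ) = ((∑ i, β i : ℕ) : ℝ) := by push_cast; rfl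
            rw [this]
            linarith [h2]
          have hsub : ∑ i : {i : Fin d // α i ≠ 0}, η i * (β i.1 : ℝ)
              ≤ (∑ i, (β i : ℝ)) * H := by
            have s1 : ∀ i : {i : Fin d // α i ≠ 0}, η i * (β i.1 : ℝ) ≤ H * (β i.1 : ℝ) := by
              intro i
              have hηH : η i ≤ H := by
                refine le_trans (le_abs_self _) ?_
                exact Finset.single_le_sum (f := fun j => |η j|)
                  (fun _ _ => abs_nonneg _) (Finset.mem_univ i)
              exact mul_le_mul_of_nonneg_right hηH (Nat.cast_nonneg _)
            calc ∑ i : {i : Fin d // α i ≠ 0}, η i * (β i.1 : ℝ)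
                ≤ ∑ i : {i : Fin d // α i ≠ 0}, H * (β i.1 : ℝ) :=
                  Finset.sum_le_sum fun i _ => s1 i
              _ = ∑ i ∈ Finset.univ.filter (fun i : Fin d => α i ≠ 0), H * (β i : ℝ) :=
                  (Finset.sum_subtype (p := fun i : Fin d => α i ≠ 0)
                    (Finset.univ.filter (fun i : Fin d => α i ≠ 0)) (by simp)
                    (fun i => H * (β i : ℝ))).symm
              _ ≤ ∑ i, H * (β i : ℝ) :=
                  Finset.sum_le_sum_of_subset_of_nonneg (Finset.filter_subset _ _)
                    (fun i _ _ => mul_nonneg hHnn (Nat.cast_nonneg _))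
              _ = H * ∑ i, (β i : ℝ) := (Finset.mul_sum _ _ _).symm
              _ = (∑ i, (β i : ℝ)) * H := mul_comm _ _
          have hsplit2 : expr β = Real.log (M β)
              - ∑ i : {i : Fin d // α i ≠ 0}, η i * (β i.1 : ℝ) - K := by
            simp only [hexpr, hK, Finset.sum_sub_distrib, mul_sub]
            ring
          have hβnn : (0:ℝ) ≤ ∑ i, (β i : ℝ) :=
            Finset.sum_nonneg fun _ _ => Nat.cast_nonneg _
          have hKabs : -|K| ≤ -K := by
            have := le_abs_self K; linarith
          nlinarith [hL, hsub, hsplit2, hT₀K, hKabs, hβnn]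
      nlinarith [hmain, hkR, hT₀nn]
  -- assemble ξ
  refine ⟨fun i => if h : α i ≠ 0 then η ⟨i, h⟩ else -T₀, fun β => ?_⟩
  have hsplit : ∑ i, (if h : α i ≠ 0 then η ⟨i, h⟩ else -T₀) * ((β i : ℝ) - (α i : ℝ))
      = (∑ i : {i : Fin d // α i ≠ 0}, η i * ((β i.1 : ℝ) - (α i.1 : ℝ)))
        + (-T₀) * ∑ i ∈ Finset.univ.filter (fun i => α i = 0), (β i : ℝ) := by
    rw [← Finset.sum_filter_add_sum_filter_not Finset.univ (fun i => α i ≠ 0)]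
    congr 1
    · rw [Finset.sum_subtype (p := fun i : Fin d => α i ≠ 0)
        (Finset.univ.filter (fun i : Fin d => α i ≠ 0)) (by simp)
        (fun i => (if h : α i ≠ 0 then η ⟨i, h⟩ else -T₀) * ((β i : ℝ) - (α i : ℝ)))]
      refine Finset.sum_congr rfl fun i _ => ?_
      rw [dif_pos i.2]
    · have hfe : Finset.univ.filter (fun i : Fin d => ¬ α i ≠ 0)
          = Finset.univ.filter (fun i : Fin d => α i = 0) := by
        apply Finset.filter_congr; intro i _; simp [not_not]
      rw [hfe, Finset.mul_sum]
      refine Finset.sum_congr rfl fun i hi => ?_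
      have hαi : α i = 0 := (Finset.mem_filter.mp hi).2
      rw [dif_neg (by simp [hαi])]
      simp [hαi]
  rw [hsplit]
  have h1 := hkey β
  have h2 := hηβ β
  simp only [hexpr] at h1
  linarith

theorem stmt13 (d : ℕ) (M : (Fin d → ℕ) → ℝ)
    (hMpos : ∀ α, 0 < M α) (hM0 : M (fun _ => 0) = 1)
    (hM : ∀ C : ℝ, 0 < C → ∃ N : ℕ, ∀ α : Fin d → ℕ, N ≤ ∑ i, α i →
      C ^ (∑ i, α i) ≤ M α)
    (G : (Fin d → ℝ) → ℝ)
    (hG : ConvexOn ℝ {x : Fin d → ℝ | ∀ i, 0 ≤ x i} G)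
    (hGa : ∀ α : Fin d → ℕ, G (fun i => (α i : ℝ)) = Real.log (M α))
    (ω : (Fin d → ℝ) → ℝ)
    (hω : ∀ s : Fin d → ℝ, ω s = sSup (Set.range fun β : Fin d → ℕ =>
        Real.log ((∏ i, s i ^ (β i : ℕ)) / M β)))
    (α : Fin d → ℕ) :
    M α = sSup {y : ℝ | ∃ s : Fin d → ℝ, (∀ i, 0 < s i) ∧
        y = (∏ i, s i ^ (α i : ℕ)) * Real.exp (-(ω s))} := by
  classical
  -- boundedness of the defining family of ω
  have hbdd : ∀ s : Fin d → ℝ, (∀ i, 0 < s i) →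
      BddAbove (Set.range fun β : Fin d → ℕ =>
        Real.log ((∏ i, s i ^ (β i : ℕ)) / M β)) := by
    intro s hs
    set C : ℝ := 1 + ∑ i, s i with hC
    have hsum_nn : 0 ≤ ∑ i, s i := Finset.sum_nonneg fun i _ => (hs i).le
    have hCpos : 0 < C := by rw [hC]; linarith
    have hsC : ∀ i, s i ≤ C := by
      intro i
      have : s i ≤ ∑ j, s j := Finset.single_le_sum (fun j _ => (hs j).le) (Finset.mem_univ i)
      rw [hC]; linarith
    obtain ⟨N, hN⟩ := hM C hCpos
    have hsubset : (Set.range fun β : Fin d → ℕ =>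
        Real.log ((∏ i, s i ^ (β i : ℕ)) / M β)) ⊆
        ((fun β : Fin d → ℕ => Real.log ((∏ i, s i ^ (β i : ℕ)) / M β)) ''
          {β : Fin d → ℕ | ∑ i, β i < N}) ∪ Set.Iic 0 := by
      rintro x ⟨β, rfl⟩
      by_cases hβ : ∑ i, β i < N
      · exact Or.inl ⟨β, hβ, rfl⟩
      · push_neg at hβ
        refine Or.inr ?_
        have hPle : ∏ i, s i ^ (β i : ℕ) ≤ C ^ (∑ i, β i) := by
          calc ∏ i, s i ^ (β i : ℕ) ≤ ∏ i, C ^ (β i : ℕ) :=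
                Finset.prod_le_prod (fun i _ => pow_nonneg (hs i).le _)
                  (fun i _ => pow_le_pow_left₀ (hs i).le (hsC i) _)
            _ = C ^ (∑ i, β i) := Finset.prod_pow_eq_pow_sum _ _ _
        have hPM : ∏ i, s i ^ (β i : ℕ) ≤ M β := hPle.trans (hN β hβ)
        have hPnn : 0 ≤ ∏ i, s i ^ (β i : ℕ) :=
          Finset.prod_nonneg fun i _ => pow_nonneg (hs i).le _
        exact Real.log_nonpos (div_nonneg hPnn (hMpos β).le)
          ((div_le_one (hMpos β)).mpr hPM)
    exact (((fin_small d N).image _).bddAbove.union bddAbove_Iic).mono hsubset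
  -- every element of the set is at most M α
  have hub : ∀ y ∈ {y : ℝ | ∃ s : Fin d → ℝ, (∀ i, 0 < s i) ∧
      y = (∏ i, s i ^ (α i : ℕ)) * Real.exp (-(ω s))}, y ≤ M α := by
    rintro y ⟨s, hs, rfl⟩
    have hPpos : 0 < ∏ i, s i ^ (α i : ℕ) :=
      Finset.prod_pos fun i _ => pow_pos (hs i) _
    have h1 : Real.log ((∏ i, s i ^ (α i : ℕ)) / M α) ≤ ω s := by
      rw [hω s]; exact le_csSup (hbdd s hs) ⟨α, rfl⟩
    have h2 : Real.exp (-ω s) ≤ Real.exp (-(Real.log ((∏ i, s i ^ (α i : ℕ)) / M α))) :=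
      Real.exp_le_exp.mpr (neg_le_neg h1)
    have h3 : Real.exp (-(Real.log ((∏ i, s i ^ (α i : ℕ)) / M α)))
        = M α / (∏ i, s i ^ (α i : ℕ)) := by
      rw [Real.exp_neg, Real.exp_log (div_pos hPpos (hMpos α)), inv_div]
    calc (∏ i, s i ^ (α i : ℕ)) * Real.exp (-(ω s))
        ≤ (∏ i, s i ^ (α i : ℕ)) * (M α / (∏ i, s i ^ (α i : ℕ))) := by
          rw [← h3]; exact mul_le_mul_of_nonneg_left h2 hPpos.le
      _ = M α := by field_simp
  have hne : {y : ℝ | ∃ s : Fin d → ℝ, (∀ i, 0 < s i) ∧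
      y = (∏ i, s i ^ (α i : ℕ)) * Real.exp (-(ω s))}.Nonempty :=
    ⟨_, ⟨fun _ => (1:ℝ), fun i => one_pos, rfl⟩⟩
  -- construct the optimal s from the subgradient
  obtain ⟨ξ, hξ⟩ := exists_xi M hMpos hM G hG hGa α
  set s : Fin d → ℝ := fun i => Real.exp (ξ i) with hsdef
  have hs : ∀ i, 0 < s i := fun i => Real.exp_pos _
  have hP : ∀ β : Fin d → ℕ, ∏ i, s i ^ (β i : ℕ) = Real.exp (∑ i, (β i : ℝ) * ξ i) := by
    intro β
    rw [Real.exp_sum]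
    refine Finset.prod_congr rfl fun i _ => ?_
    rw [hsdef]
    exact (Real.exp_nat_mul _ _).symm
  have hlog : ∀ β : Fin d → ℕ, Real.log ((∏ i, s i ^ (β i : ℕ)) / M β)
      = (∑ i, (β i : ℝ) * ξ i) - Real.log (M β) := by
    intro β
    rw [Real.log_div (by positivity) (ne_of_gt (hMpos β)), hP, Real.log_exp]
  have hPpos : 0 < ∏ i, s i ^ (α i : ℕ) :=
    Finset.prod_pos fun i _ => pow_pos (hs i) _
  have hωs : ω s = Real.log ((∏ i, s i ^ (α i : ℕ)) / M α) := by
    rw [hω s]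
    apply le_antisymm
    · refine csSup_le (Set.range_nonempty _) ?_
      rintro x ⟨β, rfl⟩
      show Real.log ((∏ i, s i ^ (β i : ℕ)) / M β)
        ≤ Real.log ((∏ i, s i ^ (α i : ℕ)) / M α)
      rw [hlog β, hlog α]
      have h1 := hξ β
      have h2 : ∑ i, ξ i * ((β i : ℝ) - (α i : ℝ))
          = ∑ i, (β i : ℝ) * ξ i - ∑ i, (α i : ℝ) * ξ i := by
        rw [← Finset.sum_sub_distrib]
        exact Finset.sum_congr rfl fun i _ => by ring
      rw [h2] at h1
      linarith
    · exact le_csSup (hbdd s hs) ⟨α, rfl⟩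
  have hmem : M α ∈ {y : ℝ | ∃ s : Fin d → ℝ, (∀ i, 0 < s i) ∧
      y = (∏ i, s i ^ (α i : ℕ)) * Real.exp (-(ω s))} := by
    refine ⟨s, hs, ?_⟩
    rw [hωs, Real.exp_neg, Real.exp_log (div_pos hPpos (hMpos α)), inv_div]
    field_simp
  exact le_antisymm (le_csSup ⟨M α, hub⟩ hmem) (csSup_le hne hub)
end

section
/- Let $\{M_\alpha\}_{\alpha\in\mathbb{N}_0^d}$ be positive reals with $M_0=1$ and $M_\alpha^{1/|\alpha|}\to+\infty$, and suppose $M_\alpha=\sup_{s\in(0,+\infty)^d} s^\alpha e^{-\omega_{\mathbf{M}}(s)}$ for all $\alpha\in\mathbb{N}_0^d$, where $\omega_{\mathbf{M}}(s)=\sup_{\beta}\log(s^\beta/M_\beta)$. Then $\{M_\alpha\}$ is log-convex, i.e. there exists a convex function $G:[0,+\infty)^d\to\mathbb{R}$ with $G(\alpha)=\log M_\alpha$ for all $\alpha$. -/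
open Filter Set

theorem stmt14 (d : ℕ) (M : (Fin d → ℕ) → ℝ)
    (hMpos : ∀ α, 0 < M α) (hM0 : M (fun _ => 0) = 1)
    (hM : ∀ C : ℝ, 0 < C → ∃ N : ℕ, ∀ α : Fin d → ℕ, N ≤ ∑ i, α i →
      C ^ (∑ i, α i) ≤ M α)
    (ω : (Fin d → ℝ) → ℝ)
    (hω : ∀ s : Fin d → ℝ, ω s = sSup (Set.range fun β : Fin d → ℕ =>
        Real.log ((∏ i, s i ^ (β i : ℕ)) / M β)))
    (heq : ∀ α : Fin d → ℕ,
      M α = sSup {y : ℝ | ∃ s : Fin d → ℝ, (∀ i, 0 < s i) ∧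
        y = (∏ i, s i ^ (α i : ℕ)) * Real.exp (-(ω s))}) :
    ∃ G : (Fin d → ℝ) → ℝ,
      ConvexOn ℝ {x : Fin d → ℝ | ∀ i, 0 ≤ x i} G ∧
      ∀ α : Fin d → ℕ, G (fun i => (α i : ℝ)) = Real.log (M α) := by
  classical
  -- f k β = ⟨β, k⟩ - log M β
  set f : (Fin d → ℝ) → (Fin d → ℕ) → ℝ :=
    fun k β => (∑ i, (β i : ℝ) * k i) - Real.log (M β) with hf
  -- Step 1: range of f k is bounded above
  have hbddf : ∀ k, BddAbove (Set.range (f k)) := by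
    intro k
    set K := ∑ i, |k i| with hK
    have hK0 : 0 ≤ K := Finset.sum_nonneg fun i _ => abs_nonneg _
    obtain ⟨N, hN⟩ := hM (Real.exp (K + 1)) (Real.exp_pos _)
    obtain ⟨c, hc⟩ := (Set.finite_range fun b : Fin d → Fin (N + 1) =>
      f k (fun i => (b i : ℕ))).bddAbove
    refine ⟨max c 0, ?_⟩
    rintro _ ⟨β, rfl⟩
    by_cases hβ : N ≤ ∑ i, β i
    · have h1 : ((∑ i, β i : ℕ) : ℝ) * (K + 1) ≤ Real.log (M β) := by
        have h := hN β hβ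
        have hlog := Real.log_le_log (by positivity) h
        rwa [Real.log_pow, Real.log_exp] at hlog
      have h2 : (∑ i, (β i : ℝ) * k i) ≤ ((∑ i, β i : ℕ) : ℝ) * K := by
        calc ∑ i, (β i : ℝ) * k i ≤ ∑ i, ((∑ j, β j : ℕ) : ℝ) * |k i| := by
              apply Finset.sum_le_sum
              intro i _
              have hb : (β i : ℝ) ≤ ((∑ j, β j : ℕ) : ℝ) := by
                exact_mod_cast Finset.single_le_sum (fun j _ => Nat.zero_le _)
                  (Finset.mem_univ i)
              calc (β i : ℝ) * k i ≤ (β i : ℝ) * |k i| :=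
                    mul_le_mul_of_nonneg_left (le_abs_self _) (Nat.cast_nonneg _)
                _ ≤ _ := mul_le_mul_of_nonneg_right hb (abs_nonneg _)
          _ = ((∑ j, β j : ℕ) : ℝ) * K := by rw [← Finset.mul_sum]
      have h3 : f k β ≤ 0 := by
        have hn : (0 : ℝ) ≤ ((∑ i, β i : ℕ) : ℝ) := Nat.cast_nonneg _
        simp only [hf]
        nlinarith
      exact h3.trans (le_max_right _ _)
    · push_neg at hβ
      have hβi : ∀ i, β i < N + 1 := fun i =>
        Nat.lt_succ_of_lt (lt_of_le_of_lt
          (Finset.single_le_sum (fun j _ => Nat.zero_le _) (Finset.mem_univ i)) hβ)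
      have := hc ⟨(fun i => ⟨β i, hβi i⟩), rfl⟩
      exact le_trans this (le_max_left _ _)
  -- Step 2: ω at exponentials
  have hωf : ∀ k : Fin d → ℝ, ω (fun i => Real.exp (k i)) = sSup (Set.range (f k)) := by
    intro k
    rw [hω]
    congr 1
    have : (fun β : Fin d → ℕ =>
        Real.log ((∏ i, Real.exp (k i) ^ (β i : ℕ)) / M β)) = f k := by
      funext β
      have hprod : (∏ i, Real.exp (k i) ^ (β i : ℕ)) =
          Real.exp (∑ i, (β i : ℝ) * k i) := by
        rw [Real.exp_sum]
        apply Finset.prod_congr rfl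
        intro i _
        rw [← Real.exp_nat_mul]
      rw [hprod, Real.log_div (Real.exp_ne_zero _) (ne_of_gt (hMpos β)), Real.log_exp]
    rw [this]
  have hωs : ∀ s : Fin d → ℝ, (∀ i, 0 < s i) →
      ω s = sSup (Set.range (f (fun i => Real.log (s i)))) := by
    intro s hs
    have hse : (fun i => Real.exp (Real.log (s i))) = s :=
      funext fun i => Real.exp_log (hs i)
    calc ω s = ω (fun i => Real.exp (Real.log (s i))) := by rw [hse]
      _ = _ := hωf _
  -- Define g and G
  set g : (Fin d → ℝ) → (Fin d → ℝ) → ℝ :=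
    fun x k => (∑ i, x i * k i) - sSup (Set.range (f k)) with hg
  set G : (Fin d → ℝ) → ℝ := fun x => sSup (Set.range (g x)) with hG
  -- Step 4: range of g x bounded above for x ≥ 0
  have hbddg : ∀ x : Fin d → ℝ, (∀ i, 0 ≤ x i) → BddAbove (Set.range (g x)) := by
    intro x hx
    obtain ⟨c, hc⟩ := (Set.finite_range fun b : ∀ i : Fin d, Fin (⌈x i⌉₊ + 1) =>
      Real.log (M (fun i => (b i : ℕ)))).bddAbove
    refine ⟨c, ?_⟩
    rintro _ ⟨k, rfl⟩
    set β : Fin d → ℕ := fun i => if k i ≤ 0 then ⌊x i⌋₊ else ⌈x i⌉₊ with hβ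
    have hβle : ∀ i, β i < ⌈x i⌉₊ + 1 := by
      intro i
      simp only [hβ]
      split
      · exact Nat.lt_succ_of_le (Nat.floor_le_ceil _)
      · exact Nat.lt_succ_self _
    have hfle : f k β ≤ sSup (Set.range (f k)) := le_csSup (hbddf k) ⟨β, rfl⟩
    have hterm : ∀ i, x i * k i ≤ (β i : ℝ) * k i := by
      intro i
      simp only [hβ]
      split
      · rename_i hki
        have h1 : (⌊x i⌋₊ : ℝ) ≤ x i := Nat.floor_le (hx i)
        nlinarith
      · rename_i hki
        push_neg at hki
        have h1 : x i ≤ (⌈x i⌉₊ : ℝ) := Nat.le_ceil (x i)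
        nlinarith
    have hgle : g x k ≤ Real.log (M β) := by
      have hsum : ∑ i, x i * k i ≤ ∑ i, (β i : ℝ) * k i :=
        Finset.sum_le_sum fun i _ => hterm i
      have hfb : f k β = (∑ i, (β i : ℝ) * k i) - Real.log (M β) := rfl
      simp only [hg]
      linarith [hfle, hsum]
    refine hgle.trans ?_
    exact hc ⟨fun i => ⟨β i, hβle i⟩, rfl⟩
  -- helper: A α bounded above
  have hA : ∀ α : Fin d → ℕ, BddAbove {y : ℝ | ∃ s : Fin d → ℝ, (∀ i, 0 < s i) ∧
      y = (∏ i, s i ^ (α i : ℕ)) * Real.exp (-(ω s))} := by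
    intro α
    by_contra h
    have h0 := Real.sSup_of_not_bddAbove h
    rw [← heq α] at h0
    exact absurd h0 (ne_of_gt (hMpos α))
  -- exponential identity
  have hexp : ∀ (α : Fin d → ℕ) (k : Fin d → ℝ),
      (∏ i, Real.exp (k i) ^ (α i : ℕ)) * Real.exp (-(ω (fun i => Real.exp (k i)))) =
        Real.exp (g (fun i => (α i : ℝ)) k) := by
    intro α k
    have hprod : (∏ i, Real.exp (k i) ^ (α i : ℕ)) =
        Real.exp (∑ i, (α i : ℝ) * k i) := by
      rw [Real.exp_sum]
      apply Finset.prod_congr rfl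
      intro i _
      rw [← Real.exp_nat_mul]
    rw [hprod, ← Real.exp_add, hωf k]
    simp only [hg]
    ring_nf
  -- value at lattice points
  have hval : ∀ α : Fin d → ℕ, G (fun i => (α i : ℝ)) = Real.log (M α) := by
    intro α
    set A := {y : ℝ | ∃ s : Fin d → ℝ, (∀ i, 0 < s i) ∧
      y = (∏ i, s i ^ (α i : ℕ)) * Real.exp (-(ω s))} with hAdef
    have hxnn : ∀ i, (0 : ℝ) ≤ (α i : ℝ) := fun i => Nat.cast_nonneg _
    have hmem : ∀ k : Fin d → ℝ, Real.exp (g (fun i => (α i : ℝ)) k) ∈ A := by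
      intro k
      exact ⟨fun i => Real.exp (k i), fun i => Real.exp_pos _, (hexp α k).symm⟩
    apply le_antisymm
    · apply csSup_le (Set.range_nonempty _)
      rintro _ ⟨k, rfl⟩
      have h1 : Real.exp (g (fun i => (α i : ℝ)) k) ≤ M α := by
        rw [heq α]
        exact le_csSup (hA α) (hmem k)
      have h2 := Real.log_le_log (Real.exp_pos _) h1
      rwa [Real.log_exp] at h2
    · have h2 : M α ≤ Real.exp (G (fun i => (α i : ℝ))) := by
        rw [heq α]
        apply csSup_le
        · exact ⟨_, fun _ => (1 : ℝ), fun i => one_pos, rfl⟩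
        · rintro y ⟨s, hs, rfl⟩
          have hsk : s = fun i => Real.exp (Real.log (s i)) :=
            funext fun i => (Real.exp_log (hs i)).symm
          rw [hsk]
          rw [hexp α (fun i => Real.log (s i))]
          apply Real.exp_le_exp.2
          exact le_csSup (hbddg _ hxnn) ⟨_, rfl⟩
      have h3 := Real.log_le_log (hMpos α) h2
      rwa [Real.log_exp] at h3
  refine ⟨G, ⟨?_, ?_⟩, hval⟩
  · -- convexity of the domain
    intro x hx y hy a b ha hb hab
    intro i
    simp only [Pi.add_apply, Pi.smul_apply, smul_eq_mul]
    exact add_nonneg (mul_nonneg ha (hx i)) (mul_nonneg hb (hy i))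
  · -- convexity inequality
    intro x hx y hy a b ha hb hab
    apply csSup_le (Set.range_nonempty _)
    rintro _ ⟨k, rfl⟩
    have h1 : g x k ≤ G x := le_csSup (hbddg x hx) ⟨k, rfl⟩
    have h2 : g y k ≤ G y := le_csSup (hbddg y hy) ⟨k, rfl⟩
    have h3 : g (a • x + b • y) k = a * g x k + b * g y k := by
      simp only [hg]
      have hsum : ∑ i, (a • x + b • y) i * k i =
          a * ∑ i, x i * k i + b * ∑ i, y i * k i := by
        rw [Finset.mul_sum, Finset.mul_sum, ← Finset.sum_add_distrib]
        apply Finset.sum_congr rfl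
        intro i _
        simp only [Pi.add_apply, Pi.smul_apply, smul_eq_mul]
        ring
      rw [hsum]
      linear_combination sSup (Set.range (f k)) * hab
    rw [h3]
    have h5 : a * g x k ≤ a * G x := mul_le_mul_of_nonneg_left h1 ha
    have h6 : b * g y k ≤ b * G y := mul_le_mul_of_nonneg_left h2 hb
    simp only [smul_eq_mul]
    linarith
end
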